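/- Let K ⊆ ℝ^d be a convex body with the origin in its interior and K ⊆ d²B, and let δ > 0 satisfy δd⁴ < 1. Then (Φ_δ(K))° ⊆ (1 − δd⁴)^{-1}·K°, and consequently vol_d(Φ_δ(K)) · vol_d((Φ_δ(K))°) ≤ (1 − δd⁴)^{-d} · vol_d(K) · vol_d(K°). -/

import Mathlib

/-!
From `φ + δr²φ² = 1` we get `1 - δr² ≤ φ_δ(r) ≤ 1`. The upper bound and convexity of `K ∋ 0` give
`Φ_δ(K) ⊆ K`. The lower bound on `K ⊆ d²B` gives `φ_δ(|x|) ≥ 1 - δd⁴`, so `y ∈ (Φ_δ(K))°`, i.e.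
`φ_δ(|x|)⟨x, y⟩ ≤ 1`, forces `(1 - δd⁴)⟨x, y⟩ ≤ 1` on `K`. Scaling by `(1 - δd⁴)⁻¹` multiplies
volumes by `(1 - δd⁴)^{-d}`.
-/
open scoped Pointwise RealInnerProductSpace
open MeasureTheory

/-- For `δ > 0`, `φ_δ(r) = 2 / (1 + √(1 + 4δr²))`, the unique positive root of
`φ + δr²φ² = 1`. -/
noncomputable def phi (δ r : ℝ) : ℝ := 2 / (1 + Real.sqrt (1 + 4 * δ * r ^ 2))

/-- The map `Φ_δ : ℝ^d → ℝ^d`, `Φ_δ(x) = φ_δ(|x|) • x`. -/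
noncomputable def Phi (δ : ℝ) {d : ℕ} (x : EuclideanSpace ℝ (Fin d)) :
    EuclideanSpace ℝ (Fin d) := phi δ ‖x‖ • x

/-- The (one-sided) polar body `K° = {y : ⟨x, y⟩ ≤ 1 for all x ∈ K}`. -/
def polarBody {d : ℕ} (K : Set (EuclideanSpace ℝ (Fin d))) :
    Set (EuclideanSpace ℝ (Fin d)) := {y | ∀ x ∈ K, ⟪x, y⟫ ≤ 1}

lemma phi_pos (δ r : ℝ) : 0 < phi δ r := by
  unfold phi
  positivity

lemma phi_add_mul_sq_phi {δ : ℝ} (hδ : 0 ≤ δ) (r : ℝ) :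
    phi δ r + δ * r ^ 2 * phi δ r ^ 2 = 1 := by
  have hs := Real.sq_sqrt (show 0 ≤ 1 + 4 * δ * r ^ 2 by positivity)
  unfold phi
  field_simp
  linear_combination -hs

lemma phi_le_one {δ : ℝ} (hδ : 0 ≤ δ) (r : ℝ) : phi δ r ≤ 1 := by
  have hrest : 0 ≤ δ * r ^ 2 * phi δ r ^ 2 := by positivity
  linarith [phi_add_mul_sq_phi hδ r]

lemma one_sub_mul_sq_le_phi {δ : ℝ} (hδ : 0 ≤ δ) (r : ℝ) : 1 - δ * r ^ 2 ≤ phi δ r := by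
  have hsq : phi δ r ^ 2 ≤ 1 := pow_le_one₀ (phi_pos δ r).le (phi_le_one hδ r)
  calc 1 - δ * r ^ 2 ≤ 1 - δ * r ^ 2 * phi δ r ^ 2 :=
        sub_le_sub_left (mul_le_of_le_one_right (by positivity) hsq) 1
    _ = phi δ r := by linarith [phi_add_mul_sq_phi hδ r]

lemma Phi_image_subset {δ : ℝ} (hδ : 0 ≤ δ) {d : ℕ} {K : Set (EuclideanSpace ℝ (Fin d))}
    (hK : Convex ℝ K) (h0 : 0 ∈ K) : Phi δ '' K ⊆ K := by
  rintro _ ⟨x, hx, rfl⟩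
  exact hK.smul_mem_of_zero_mem h0 hx ⟨(phi_pos δ _).le, phi_le_one hδ _⟩

lemma polarBody_image_smul_subset {d : ℕ} {K : Set (EuclideanSpace ℝ (Fin d))}
    {g : EuclideanSpace ℝ (Fin d) → ℝ} {c : ℝ} (hc : 0 < c) (hg : ∀ x ∈ K, c ≤ g x) :
    polarBody ((fun x ↦ g x • x) '' K) ⊆ c⁻¹ • polarBody K := by
  intro y hy
  rw [Set.mem_smul_set_iff_inv_smul_mem₀ (inv_ne_zero hc.ne'), inv_inv]
  intro x hx
  have hgxy : g x * ⟪x, y⟫ ≤ 1 := by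
    simpa only [real_inner_smul_left] using hy _ (Set.mem_image_of_mem _ hx)
  rw [real_inner_smul_right]
  rcases le_or_gt ⟪x, y⟫ 0 with hxy | hxy
  · nlinarith
  · nlinarith [hg x hx]

lemma one_sub_le_phi_norm_of_mem_closedBall {δ : ℝ} (hδ : 0 ≤ δ) {d : ℕ} {R : ℝ}
    {x : EuclideanSpace ℝ (Fin d)} (hx : x ∈ Metric.closedBall 0 R) :
    1 - δ * R ^ 2 ≤ phi δ ‖x‖ := by
  rw [mem_closedBall_zero_iff] at hx
  have : ‖x‖ ^ 2 ≤ R ^ 2 := pow_le_pow_left₀ (norm_nonneg x) hx 2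
  nlinarith [one_sub_mul_sq_le_phi hδ ‖x‖]

lemma volume_inv_smul {d : ℕ} {c : ℝ} (hc : 0 < c) (S : Set (EuclideanSpace ℝ (Fin d))) :
    volume (c⁻¹ • S) = ENNReal.ofReal (c⁻¹ ^ d) * volume S := by
  rw [Measure.addHaar_smul, finrank_euclideanSpace_fin, abs_of_pos (by positivity)]

theorem stmt9_general (d : ℕ) (δ : ℝ) (K : Set (EuclideanSpace ℝ (Fin d)))
    (hKconv : Convex ℝ K)
    (h0 : (0 : EuclideanSpace ℝ (Fin d)) ∈ interior K)
    (hKB : K ⊆ Metric.closedBall 0 ((d : ℝ) ^ 2))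
    (hδ : 0 < δ) (hδ2 : δ * (d : ℝ) ^ 4 < 1) :
    polarBody (Phi δ '' K) ⊆ (1 - δ * (d : ℝ) ^ 4)⁻¹ • polarBody K ∧
    volume (Phi δ '' K) * volume (polarBody (Phi δ '' K)) ≤
      ENNReal.ofReal ((1 - δ * (d : ℝ) ^ 4)⁻¹ ^ d) *
        (volume K * volume (polarBody K)) := by
  have hc : 0 < 1 - δ * (d : ℝ) ^ 4 := by linarith
  have hpolar : polarBody (Phi δ '' K) ⊆ (1 - δ * (d : ℝ) ^ 4)⁻¹ • polarBody K := by
    refine polarBody_image_smul_subset hc fun x hx ↦ ?_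
    simpa only [← pow_mul] using one_sub_le_phi_norm_of_mem_closedBall hδ.le (hKB hx)
  refine ⟨hpolar, ?_⟩
  calc volume (Phi δ '' K) * volume (polarBody (Phi δ '' K))
      ≤ volume K * volume ((1 - δ * (d : ℝ) ^ 4)⁻¹ • polarBody K) :=
        mul_le_mul' (measure_mono (Phi_image_subset hδ.le hKconv (interior_subset h0)))
          (measure_mono hpolar)
    _ = ENNReal.ofReal ((1 - δ * (d : ℝ) ^ 4)⁻¹ ^ d) * (volume K * volume (polarBody K)) := by
        rw [volume_inv_smul hc, mul_left_comm]

/-- Let `K ⊆ ℝ^d` be a convex body with the origin in its interior, `K ⊆ d²B`, and let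
`δ > 0` satisfy `δd⁴ < 1`. Then `(Φ_δ(K))° ⊆ (1 - δd⁴)⁻¹·K°` and consequently
`vol(Φ_δ(K))·vol((Φ_δ(K))°) ≤ (1 - δd⁴)^{-d}·vol(K)·vol(K°)`. -/
theorem stmt9 (d : ℕ) (δ : ℝ) (K : Set (EuclideanSpace ℝ (Fin d)))
    (hKcomp : IsCompact K) (hKconv : Convex ℝ K)
    (h0 : (0 : EuclideanSpace ℝ (Fin d)) ∈ interior K)
    (hKB : K ⊆ Metric.closedBall 0 ((d : ℝ) ^ 2))
    (hδ : 0 < δ) (hδ2 : δ * (d : ℝ) ^ 4 < 1) :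
    polarBody (Phi δ '' K) ⊆ (1 - δ * (d : ℝ) ^ 4)⁻¹ • polarBody K ∧
    volume (Phi δ '' K) * volume (polarBody (Phi δ '' K)) ≤
      ENNReal.ofReal ((1 - δ * (d : ℝ) ^ 4)⁻¹ ^ d) *
        (volume K * volume (polarBody K)) :=
  stmt9_general d δ K hKconv h0 hKB hδ hδ2
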